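/- arXiv:1512.05131 — 4 statements merged into one kernel-verified Lean document; each statement's English description precedes it below -/
import Mathlib

section
/- Let t ∈ [0,1] and let f₀, f₁, g : ℝⁿ → ℝ ∪ {+∞} be Borel functions such that g((1−t)x₀ + t x₁) ≤ (1−t) f₀(x₀) + t f₁(x₁) for all x₀, x₁ ∈ ℝⁿ. Then ∫ e^{−g} dx ≥ (∫ e^{−f₀} dx)^{1−t} (∫ e^{−f₁} dx)^{t}. -/
/-!
In dimension one, after truncating and rescaling so that `⨆ φ₀ = ⨆ φ₁ = 1`, each superlevel set
`{ψ > s}`, `0 < s < 1`, contains `(1 - t) • {φ₀ > s} + t • {φ₁ > s}`, so the one-dimensional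
Brunn–Minkowski inequality `|A| + |B| ≤ |A + B|` gives
`(1 - t) |{φ₀ > s}| + t |{φ₁ > s}| ≤ |{ψ > s}|`. Integrating in `s` (layer cake) and using the
weighted AM–GM inequality yields `(∫ φ₀) ^ (1 - t) * (∫ φ₁) ^ t ≤ ∫ ψ`. This multiplicative
inequality tensorizes by Fubini, hence holds on `ℝⁿ`, and for `φᵢ = e^{-fᵢ}`, `ψ = e^{-g}` its
hypothesis is the exponential of the assumed convexity inequality.
-/

open MeasureTheory ENNReal

noncomputable def expNeg (y : EReal) : ℝ≥0∞ :=
  if y = ⊤ then 0 else ENNReal.ofReal (Real.exp (-y.toReal))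

open Set
open scoped NNReal Pointwise

theorem ENNReal.rpow_one_sub_mul_rpow_le_add {t : ℝ} (ht0 : 0 < t) (ht1 : t < 1) (a b : ℝ≥0∞) :
    a ^ (1 - t) * b ^ t ≤ ENNReal.ofReal (1 - t) * a + ENNReal.ofReal t * b := by
  rcases eq_or_ne a ⊤ with rfl | ha
  · simp [ENNReal.mul_top, ht1]
  rcases eq_or_ne b ⊤ with rfl | hb
  · simp [ENNReal.mul_top, ht0]
  lift a to ℝ≥0 using ha
  lift b to ℝ≥0 using hb
  have key := NNReal.geom_mean_le_arith_mean2_weighted (1 - t).toNNReal t.toNNReal a b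
    (by rw [← Real.toNNReal_add (by linarith) ht0.le]; simp)
  rw [Real.coe_toNNReal _ (by linarith), Real.coe_toNNReal _ ht0.le] at key
  rw [← ENNReal.coe_rpow_of_nonneg _ (by linarith), ← ENNReal.coe_rpow_of_nonneg _ ht0.le]
  simp only [ENNReal.ofReal]
  exact_mod_cast key

theorem Real.volume_add_volume_le_volume_add_of_isCompact {K₁ K₂ : Set ℝ} (h₁ : IsCompact K₁)
    (h₂ : IsCompact K₂) (ne₁ : K₁.Nonempty) (ne₂ : K₂.Nonempty) :
    volume K₁ + volume K₂ ≤ volume (K₁ + K₂) := by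
  set a := sSup K₁
  set b := sInf K₂
  have hU : volume ((· + b) '' K₁) = volume K₁ := by
    rw [image_add_right]; exact measure_preimage_add_right _ _ _
  have hV : volume ((a + ·) '' K₂) = volume K₂ := by
    rw [image_add_left]; exact measure_preimage_add _ _ _
  have hUV : (· + b) '' K₁ ∩ (a + ·) '' K₂ ⊆ {a + b} := by
    rintro _ ⟨⟨x, hx, rfl⟩, ⟨y, hy, hxy⟩⟩
    exact le_antisymm (add_le_add (le_csSup h₁.bddAbove hx) le_rfl)
      (hxy ▸ add_le_add le_rfl (csInf_le h₂.bddBelow hy))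
  calc volume K₁ + volume K₂
      = volume ((· + b) '' K₁ ∪ (a + ·) '' K₂) + volume ((· + b) '' K₁ ∩ (a + ·) '' K₂) := by
        rw [measure_union_add_inter _ (h₂.image (continuous_const_add a)).measurableSet, hU, hV]
    _ = volume ((· + b) '' K₁ ∪ (a + ·) '' K₂) := by
        rw [measure_mono_null hUV (measure_singleton _), add_zero]
    _ ≤ volume (K₁ + K₂) := by
        refine measure_mono (union_subset ?_ ?_)
        · rintro _ ⟨x, hx, rfl⟩; exact add_mem_add hx (h₂.sInf_mem ne₂)
        · rintro _ ⟨y, hy, rfl⟩; exact add_mem_add (h₁.sSup_mem ne₁) hy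

theorem Real.volume_add_volume_le_volume_add {A B : Set ℝ} (hA : MeasurableSet A)
    (hB : MeasurableSet B) (neA : A.Nonempty) (neB : B.Nonempty) :
    volume A + volume B ≤ volume (A + B) := by
  obtain ⟨a, ha⟩ := neA
  obtain ⟨b, hb⟩ := neB
  rw [hA.measure_eq_iSup_isCompact, hB.measure_eq_iSup_isCompact]
  simp only [iSup_and']
  refine ENNReal.biSup_add_biSup_le' ⟨∅, empty_subset _, isCompact_empty⟩
    ⟨∅, empty_subset _, isCompact_empty⟩ fun K₁ ⟨hK₁A, hK₁⟩ K₂ ⟨hK₂B, hK₂⟩ => ?_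
  -- inserting `a` (resp. `b`) makes the compact sets nonempty without leaving `A` (resp. `B`)
  calc volume K₁ + volume K₂ ≤ volume (insert a K₁) + volume (insert b K₂) := by
        gcongr <;> exact subset_insert _ _
    _ ≤ volume (insert a K₁ + insert b K₂) :=
        volume_add_volume_le_volume_add_of_isCompact (hK₁.insert a) (hK₂.insert b)
          (insert_nonempty _ _) (insert_nonempty _ _)
    _ ≤ volume (A + B) := measure_mono (add_subset_add (insert_subset ha hK₁A)
          (insert_subset hb hK₂B))

section LayerCake

variable {α : Type*} [MeasurableSpace α] {μ : Measure α}

theorem lintegral_eq_setLIntegral_Ioo_measure_lt {φ : α → ℝ≥0∞} (hφ : Measurable φ)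
    (h1 : ∀ x, φ x ≤ 1) :
    ∫⁻ x, φ x ∂μ = ∫⁻ s in Ioo (0 : ℝ) 1, μ {x | ENNReal.ofReal s < φ x} := by
  have hφ_ne_top : ∀ x, φ x ≠ ⊤ := fun x => ne_top_of_le_ne_top one_ne_top (h1 x)
  have hlevel : ∀ s : ℝ, 0 ≤ s → {x | s < (φ x).toReal} = {x | ENNReal.ofReal s < φ x} :=
    fun s hs => by ext x; exact (ENNReal.ofReal_lt_iff_lt_toReal hs (hφ_ne_top x)).symm
  have hempty : ∀ s : ℝ, 1 ≤ s → {x | s < (φ x).toReal} = ∅ := fun s hs => by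
    ext x
    simpa using (ENNReal.toReal_le_of_le_ofReal zero_le_one (by simpa using h1 x)).trans hs
  calc ∫⁻ x, φ x ∂μ = ∫⁻ x, ENNReal.ofReal (φ x).toReal ∂μ := by
        simp only [ENNReal.ofReal_toReal (hφ_ne_top _)]
    _ = ∫⁻ s in Ioi 0, μ {x | s < (φ x).toReal} :=
        lintegral_eq_lintegral_meas_lt μ (ae_of_all _ fun _ => toReal_nonneg)
          hφ.ennreal_toReal.aemeasurable
    _ = (∫⁻ s in Ioo 0 1, μ {x | s < (φ x).toReal})
          + ∫⁻ s in Ici 1, μ {x | s < (φ x).toReal} := by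
        rw [← lintegral_union measurableSet_Ici
          (disjoint_left.2 fun _ hs hs' => (not_le.2 hs.2) hs'), Ioo_union_Ici_eq_Ioi zero_lt_one]
    _ = ∫⁻ s in Ioo (0 : ℝ) 1, μ {x | ENNReal.ofReal s < φ x} := by
        rw [setLIntegral_congr_fun measurableSet_Ici (fun s hs => by rw [hempty s hs]),
          setLIntegral_congr_fun measurableSet_Ioo (fun s hs => by rw [hlevel s hs.1.le])]
        simp

theorem setLIntegral_Ioo_measure_lt_le_lintegral {φ : α → ℝ≥0∞} (hφ : Measurable φ) :
    ∫⁻ s in Ioo (0 : ℝ) 1, μ {x | ENNReal.ofReal s < φ x} ≤ ∫⁻ x, φ x ∂μ :=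
  calc ∫⁻ s in Ioo (0 : ℝ) 1, μ {x | ENNReal.ofReal s < φ x}
      = ∫⁻ s in Ioo (0 : ℝ) 1, μ {x | ENNReal.ofReal s < min (φ x) 1} :=
        setLIntegral_congr_fun measurableSet_Ioo fun s hs => by
          simp only [lt_min_iff, ENNReal.ofReal_lt_one.2 hs.2, and_true]
    _ = ∫⁻ x, min (φ x) 1 ∂μ :=
        (lintegral_eq_setLIntegral_Ioo_measure_lt (hφ.min measurable_const)
          fun _ => min_le_right _ _).symm
    _ ≤ ∫⁻ x, φ x ∂μ := lintegral_mono fun _ => min_le_left _ _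

theorem lintegral_eq_iSup_lintegral_min_natCast {φ : α → ℝ≥0∞} (hφ : Measurable φ) :
    ∫⁻ x, φ x ∂μ = ⨆ n : ℕ, ∫⁻ x, min (φ x) n ∂μ := by
  rw [← lintegral_iSup (fun n => hφ.min measurable_const)
    fun m n hmn x => min_le_min le_rfl (Nat.cast_le.2 hmn)]
  simp only [← inf_iSup_eq, ENNReal.iSup_natCast, inf_top_eq]

end LayerCake

theorem ENNReal.iSup_mul_iSup_le_of_monotone {u v : ℕ → ℝ≥0∞} (hu : Monotone u)
    (hv : Monotone v) {r : ℝ≥0∞} (h : ∀ n, u n * v n ≤ r) : (⨆ n, u n) * ⨆ n, v n ≤ r := by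
  rw [ENNReal.iSup_mul]
  refine iSup_le fun i => ?_
  rw [ENNReal.mul_iSup]
  exact iSup_le fun j =>
    (mul_le_mul' (hu (le_max_left i j)) (hv (le_max_right i j))).trans (h _)

theorem ENNReal.iSup_rpow {ι : Sort*} (u : ι → ℝ≥0∞) {p : ℝ} (hp : 0 < p) :
    (⨆ i, u i) ^ p = ⨆ i, u i ^ p :=
  Monotone.map_iSup_of_continuousAt (ENNReal.continuous_rpow_const.continuousAt)
    (ENNReal.monotone_rpow_of_nonneg hp.le) (ENNReal.zero_rpow_of_pos hp)

theorem smul_setOf_lt_add_smul_setOf_lt_subset {E : Type*} [AddCommMonoid E] [Module ℝ E]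
    {t : ℝ} (ht0 : 0 < t) (ht1 : t < 1) {φ₀ φ₁ ψ : E → ℝ≥0∞}
    (h : ∀ x₀ x₁, φ₀ x₀ ^ (1 - t) * φ₁ x₁ ^ t ≤ ψ ((1 - t) • x₀ + t • x₁))
    {c : ℝ≥0∞} (hc0 : c ≠ 0) (hc : c ≠ ⊤) :
    (1 - t) • {x | c < φ₀ x} + t • {x | c < φ₁ x} ⊆ {x | c < ψ x} := by
  rintro _ ⟨_, ⟨x₀, hx₀, rfl⟩, _, ⟨x₁, hx₁, rfl⟩, rfl⟩
  calc c = c ^ (1 - t) * c ^ t := by rw [← ENNReal.rpow_add _ _ hc0 hc, sub_add_cancel, rpow_one]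
    _ < φ₀ x₀ ^ (1 - t) * φ₁ x₁ ^ t :=
        ENNReal.mul_lt_mul (ENNReal.rpow_lt_rpow hx₀ (by linarith)) (ENNReal.rpow_lt_rpow hx₁ ht0)
    _ ≤ ψ ((1 - t) • x₀ + t • x₁) := h x₀ x₁

theorem lintegral_rpow_mul_lintegral_rpow_le_of_iSup_eq_one {t : ℝ} (ht0 : 0 < t) (ht1 : t < 1)
    {φ₀ φ₁ ψ : ℝ → ℝ≥0∞} (hφ₀ : Measurable φ₀) (hφ₁ : Measurable φ₁) (hψ : Measurable ψ)
    (hsup₀ : ⨆ x, φ₀ x = 1) (hsup₁ : ⨆ x, φ₁ x = 1)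
    (h : ∀ x₀ x₁, φ₀ x₀ ^ (1 - t) * φ₁ x₁ ^ t ≤ ψ ((1 - t) • x₀ + t • x₁)) :
    (∫⁻ x, φ₀ x) ^ (1 - t) * (∫⁻ x, φ₁ x) ^ t ≤ ∫⁻ x, ψ x := by
  have hlevel : ∀ s ∈ Ioo (0 : ℝ) 1,
      ENNReal.ofReal (1 - t) * volume {x | ENNReal.ofReal s < φ₀ x}
        + ENNReal.ofReal t * volume {x | ENNReal.ofReal s < φ₁ x}
        ≤ volume {x | ENNReal.ofReal s < ψ x} := by
    intro s hs
    have hs1 : ENNReal.ofReal s < 1 := ENNReal.ofReal_lt_one.2 hs.2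
    have hne : ∀ φ : ℝ → ℝ≥0∞, ⨆ x, φ x = 1 → {x | ENNReal.ofReal s < φ x}.Nonempty :=
      fun φ hφ => lt_iSup_iff.1 (hφ ▸ hs1 : ENNReal.ofReal s < ⨆ x, φ x)
    have hvol : ∀ (r : ℝ), 0 < r → ∀ A : Set ℝ, volume (r • A) = ENNReal.ofReal r * volume A :=
      fun r hr A => by simp [Measure.addHaar_smul, abs_of_pos hr]
    rw [← hvol _ (by linarith), ← hvol _ ht0]
    refine (Real.volume_add_volume_le_volume_add ?_ ?_ ((hne φ₀ hsup₀).smul_set)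
      ((hne φ₁ hsup₁).smul_set)).trans (measure_mono ?_)
    · exact (hφ₀ measurableSet_Ioi).const_smul₀ _
    · exact (hφ₁ measurableSet_Ioi).const_smul₀ _
    · exact smul_setOf_lt_add_smul_setOf_lt_subset ht0 ht1 h
        (by simpa [ENNReal.ofReal_eq_zero] using hs.1) ofReal_ne_top
  have hle : ∀ φ : ℝ → ℝ≥0∞, ⨆ x, φ x = 1 → ∀ x, φ x ≤ 1 := fun φ hφ x => hφ ▸ le_iSup φ x
  calc (∫⁻ x, φ₀ x) ^ (1 - t) * (∫⁻ x, φ₁ x) ^ t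
      ≤ ENNReal.ofReal (1 - t) * (∫⁻ x, φ₀ x) + ENNReal.ofReal t * ∫⁻ x, φ₁ x :=
        ENNReal.rpow_one_sub_mul_rpow_le_add ht0 ht1 _ _
    _ = (∫⁻ s in Ioo (0 : ℝ) 1, ENNReal.ofReal (1 - t) * volume {x | ENNReal.ofReal s < φ₀ x})
          + ∫⁻ s in Ioo (0 : ℝ) 1, ENNReal.ofReal t * volume {x | ENNReal.ofReal s < φ₁ x} := by
        rw [lintegral_const_mul' _ _ ofReal_ne_top, lintegral_const_mul' _ _ ofReal_ne_top,
          lintegral_eq_setLIntegral_Ioo_measure_lt hφ₀ (hle φ₀ hsup₀),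
          lintegral_eq_setLIntegral_Ioo_measure_lt hφ₁ (hle φ₁ hsup₁)]
    _ ≤ ∫⁻ s in Ioo (0 : ℝ) 1, volume {x | ENNReal.ofReal s < ψ x} :=
        (le_lintegral_add _ _).trans (setLIntegral_mono' measurableSet_Ioo hlevel)
    _ ≤ ∫⁻ x, ψ x := setLIntegral_Ioo_measure_lt_le_lintegral hψ

theorem lintegral_rpow_mul_lintegral_rpow_le_of_iSup_ne_top {t : ℝ} (ht0 : 0 < t) (ht1 : t < 1)
    {φ₀ φ₁ ψ : ℝ → ℝ≥0∞} (hφ₀ : Measurable φ₀) (hφ₁ : Measurable φ₁) (hψ : Measurable ψ)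
    (hsup₀ : ⨆ x, φ₀ x ≠ ⊤) (hsup₁ : ⨆ x, φ₁ x ≠ ⊤)
    (h : ∀ x₀ x₁, φ₀ x₀ ^ (1 - t) * φ₁ x₁ ^ t ≤ ψ ((1 - t) • x₀ + t • x₁)) :
    (∫⁻ x, φ₀ x) ^ (1 - t) * (∫⁻ x, φ₁ x) ^ t ≤ ∫⁻ x, ψ x := by
  have h1t : 0 < 1 - t := by linarith
  set M₀ := ⨆ x, φ₀ x
  set M₁ := ⨆ x, φ₁ x
  rcases eq_or_ne M₀ 0 with hM₀ | hM₀
  · simp [funext (ENNReal.iSup_eq_zero.1 hM₀), ENNReal.zero_rpow_of_pos h1t]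
  rcases eq_or_ne M₁ 0 with hM₁ | hM₁
  · simp [funext (ENNReal.iSup_eq_zero.1 hM₁), ENNReal.zero_rpow_of_pos ht0]
  set K := M₀⁻¹ ^ (1 - t) * M₁⁻¹ ^ t
  have hK0 : K ≠ 0 := mul_ne_zero
    (ENNReal.rpow_pos (ENNReal.inv_pos.2 hsup₀) (inv_ne_top.2 hM₀)).ne'
    (ENNReal.rpow_pos (ENNReal.inv_pos.2 hsup₁) (inv_ne_top.2 hM₁)).ne'
  have hKtop : K ≠ ⊤ := mul_ne_top (rpow_ne_top_of_nonneg h1t.le (inv_ne_top.2 hM₀))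
    (rpow_ne_top_of_nonneg ht0.le (inv_ne_top.2 hM₁))
  have hsplit : ∀ a b c d : ℝ≥0∞, (a * b) ^ (1 - t) * (c * d) ^ t
      = (a ^ (1 - t) * c ^ t) * (b ^ (1 - t) * d ^ t) := fun a b c d => by
    rw [mul_rpow_of_nonneg _ _ h1t.le, mul_rpow_of_nonneg _ _ ht0.le]; ring
  -- the inequality is homogeneous: rescale `φ₀`, `φ₁` to supremum `1`
  have key := lintegral_rpow_mul_lintegral_rpow_le_of_iSup_eq_one ht0 ht1
    (hφ₀.const_mul M₀⁻¹) (hφ₁.const_mul M₁⁻¹) (hψ.const_mul K)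
    (by rw [← ENNReal.mul_iSup, ENNReal.inv_mul_cancel hM₀ hsup₀])
    (by rw [← ENNReal.mul_iSup, ENNReal.inv_mul_cancel hM₁ hsup₁])
    fun x₀ x₁ => by rw [hsplit]; exact mul_le_mul_right (h x₀ x₁) K
  rw [lintegral_const_mul _ hφ₀, lintegral_const_mul _ hφ₁, lintegral_const_mul _ hψ,
    hsplit] at key
  exact (ENNReal.mul_le_mul_iff_right hK0 hKtop).1 key

def PrekopaLeindler (t : ℝ) (E : Type*) [MeasureSpace E] [AddCommMonoid E] [Module ℝ E] :
    Prop :=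
  ∀ φ₀ φ₁ ψ : E → ℝ≥0∞, Measurable φ₀ → Measurable φ₁ → Measurable ψ →
    (∀ x₀ x₁, φ₀ x₀ ^ (1 - t) * φ₁ x₁ ^ t ≤ ψ ((1 - t) • x₀ + t • x₁)) →
    (∫⁻ x, φ₀ x) ^ (1 - t) * (∫⁻ x, φ₁ x) ^ t ≤ ∫⁻ x, ψ x

namespace PrekopaLeindler

variable {t : ℝ} {E F : Type*} [MeasureSpace E] [AddCommMonoid E] [Module ℝ E]
  [MeasureSpace F] [AddCommMonoid F] [Module ℝ F]

theorem zero : PrekopaLeindler 0 E := fun _ _ _ _ _ _ h => by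
  simpa using lintegral_mono fun x => by simpa using h x x

theorem one : PrekopaLeindler 1 E := fun _ _ _ _ _ _ h => by
  simpa using lintegral_mono fun x => by simpa using h x x

theorem real_of_pos_of_lt_one (ht0 : 0 < t) (ht1 : t < 1) : PrekopaLeindler t ℝ := by
  intro φ₀ φ₁ ψ hφ₀ hφ₁ hψ h
  have hmono : ∀ φ : ℝ → ℝ≥0∞, Monotone fun n : ℕ => ∫⁻ x, min (φ x) n :=
    fun φ m n hmn => lintegral_mono fun x => min_le_min le_rfl (Nat.cast_le.2 hmn)
  have hbdd : ∀ (φ : ℝ → ℝ≥0∞) (n : ℕ), ⨆ x, min (φ x) n ≠ ⊤ := fun φ n =>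
    ne_top_of_le_ne_top (natCast_ne_top n) (iSup_le fun _ => min_le_right _ _)
  rw [lintegral_eq_iSup_lintegral_min_natCast hφ₀, lintegral_eq_iSup_lintegral_min_natCast hφ₁,
    ENNReal.iSup_rpow _ (by linarith), ENNReal.iSup_rpow _ ht0]
  refine ENNReal.iSup_mul_iSup_le_of_monotone
    ((ENNReal.monotone_rpow_of_nonneg (by linarith)).comp (hmono φ₀))
    ((ENNReal.monotone_rpow_of_nonneg ht0.le).comp (hmono φ₁)) fun n => ?_
  refine lintegral_rpow_mul_lintegral_rpow_le_of_iSup_ne_top ht0 ht1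
    (hφ₀.min measurable_const) (hφ₁.min measurable_const) hψ (hbdd φ₀ n) (hbdd φ₁ n)
    fun x₀ x₁ => le_trans ?_ (h x₀ x₁)
  gcongr <;> exact min_le_left _ _

theorem real (ht0 : 0 ≤ t) (ht1 : t ≤ 1) : PrekopaLeindler t ℝ := by
  rcases ht0.eq_or_lt with rfl | ht0
  · exact zero
  rcases ht1.eq_or_lt with rfl | ht1
  · exact one
  exact real_of_pos_of_lt_one ht0 ht1

theorem prod [SFinite (volume : Measure F)] (hE : PrekopaLeindler t E)
    (hF : PrekopaLeindler t F) : PrekopaLeindler t (E × F) := by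
  intro φ₀ φ₁ ψ hφ₀ hφ₁ hψ h
  rw [Measure.volume_eq_prod, lintegral_prod _ hφ₀.aemeasurable,
    lintegral_prod _ hφ₁.aemeasurable, lintegral_prod _ hψ.aemeasurable]
  refine hE _ _ _ hφ₀.lintegral_prod_right' hφ₁.lintegral_prod_right'
    hψ.lintegral_prod_right' fun x₀ x₁ => ?_
  exact hF _ _ _ (hφ₀.comp measurable_prodMk_left) (hφ₁.comp measurable_prodMk_left)
    (hψ.comp measurable_prodMk_left) fun y₀ y₁ => h (x₀, y₀) (x₁, y₁)

theorem map (hE : PrekopaLeindler t E) {f : E → F} (hf : MeasurePreserving f volume volume)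
    (hlin : ∀ x₀ x₁, f ((1 - t) • x₀ + t • x₁) = (1 - t) • f x₀ + t • f x₁) :
    PrekopaLeindler t F := by
  intro φ₀ φ₁ ψ hφ₀ hφ₁ hψ h
  rw [← hf.lintegral_comp hφ₀, ← hf.lintegral_comp hφ₁, ← hf.lintegral_comp hψ]
  refine hE _ _ _ (hφ₀.comp hf.measurable) (hφ₁.comp hf.measurable) (hψ.comp hf.measurable)
    fun x₀ x₁ => ?_
  simpa only [Function.comp, hlin] using h (f x₀) (f x₁)

theorem pi (hℝ : PrekopaLeindler t ℝ) : ∀ n : ℕ, PrekopaLeindler t (Fin n → ℝ)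
  | 0 => fun _ _ _ _ _ _ h => by
    have hvol : (volume : Measure (Fin 0 → ℝ)) univ = 1 := by simp [volume_pi]
    simp only [lintegral_unique, hvol, mul_one]
    simpa only [Subsingleton.elim _ (default : Fin 0 → ℝ)] using h default default
  | n + 1 =>
    (hℝ.prod (pi hℝ n)).map (volume_preserving_piFinSuccAbove (fun _ : Fin (n + 1) => ℝ) 0).symm
      fun _ _ => by ext j; refine Fin.cases ?_ (fun _ => ?_) j <;> simp

theorem euclideanSpace (ht0 : 0 ≤ t) (ht1 : t ≤ 1) (n : ℕ) :
    PrekopaLeindler t (EuclideanSpace ℝ (Fin n)) :=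
  (pi (real ht0 ht1) n).map (PiLp.volume_preserving_toLp (Fin n)) fun _ _ => rfl

end PrekopaLeindler

theorem expNeg_eq_exp_neg {y : EReal} (hy : y ≠ ⊥) : expNeg y = EReal.exp (-y) := by
  induction y with
  | bot => exact absurd rfl hy
  | coe r => simp [expNeg, ← EReal.coe_neg]
  | top => simp [expNeg]

theorem measurable_expNeg : Measurable expNeg :=
  Measurable.ite measurableSet_eq measurable_const
    (ENNReal.measurable_ofReal.comp (Real.measurable_exp.comp measurable_ereal_toReal.neg))

theorem expNeg_le_expNeg {x y : EReal} (hx : x ≠ ⊥) (h : x ≤ y) : expNeg y ≤ expNeg x := by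
  rw [expNeg_eq_exp_neg hx, expNeg_eq_exp_neg (ne_bot_of_le_ne_bot hx h)]
  exact EReal.exp_monotone (EReal.neg_le_neg_iff.2 h)

theorem expNeg_coe_mul_add_coe_mul {t : ℝ} (ht0 : 0 ≤ t) (ht1 : t ≤ 1) {a b : EReal}
    (ha : a ≠ ⊥) (hb : b ≠ ⊥) :
    expNeg (((1 - t : ℝ) : EReal) * a + (t : EReal) * b) = expNeg a ^ (1 - t) * expNeg b ^ t := by
  have hmul : ∀ {r : ℝ} {c : EReal}, 0 ≤ r → c ≠ ⊥ → (r : EReal) * c ≠ ⊥ := fun hr hc =>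
    (EReal.mul_ne_bot _ _).2 ⟨Or.inl (EReal.coe_ne_bot _), Or.inr hc,
      Or.inl (EReal.coe_ne_top _), Or.inl (EReal.coe_nonneg.2 hr)⟩
  have h₀ := hmul (sub_nonneg.2 ht1) ha
  have h₁ := hmul ht0 hb
  rw [expNeg_eq_exp_neg (EReal.add_ne_bot_iff.2 ⟨h₀, h₁⟩), expNeg_eq_exp_neg ha,
    expNeg_eq_exp_neg hb, EReal.neg_add (Or.inl h₀) (Or.inr h₁), sub_eq_add_neg, EReal.exp_add,
    ← mul_neg, ← mul_neg, mul_comm _ (-a), mul_comm _ (-b), EReal.exp_mul, EReal.exp_mul]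

/-- Prékopa–Leindler inequality. -/
theorem prekopa_leindler (n : ℕ) (t : ℝ) (ht0 : 0 ≤ t) (ht1 : t ≤ 1)
    (f₀ f₁ g : EuclideanSpace ℝ (Fin n) → EReal)
    (hf₀ : Measurable f₀) (hf₁ : Measurable f₁) (hg : Measurable g)
    (hf₀' : ∀ x, f₀ x ≠ ⊥) (hf₁' : ∀ x, f₁ x ≠ ⊥) (hg' : ∀ x, g x ≠ ⊥)
    (h : ∀ x₀ x₁ : EuclideanSpace ℝ (Fin n),
      g ((1 - t) • x₀ + t • x₁) ≤ ((1 - t : ℝ) : EReal) * f₀ x₀ + (t : EReal) * f₁ x₁) :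
    (∫⁻ x, expNeg (f₀ x)) ^ (1 - t) * (∫⁻ x, expNeg (f₁ x)) ^ t
      ≤ ∫⁻ x, expNeg (g x) :=
  PrekopaLeindler.euclideanSpace ht0 ht1 n _ _ _ (measurable_expNeg.comp hf₀)
    (measurable_expNeg.comp hf₁) (measurable_expNeg.comp hg) fun x₀ x₁ =>
      expNeg_coe_mul_add_coe_mul ht0 ht1 (hf₀' x₀) (hf₁' x₁) ▸ expNeg_le_expNeg (hg' _) (h x₀ x₁)
end

section
/- For all s, t, r ∈ [0,1], setting m = (1−r)s + rt, the linear map A : ℝⁿ × ℝⁿ → ℝⁿ × ℝⁿ given by A(x₀,x₁) = ((1−s)x₀ + s x₁, (1−t)x₀ + t x₁) has operator norm at most 1, where the source is equipped with the weighted norm ‖(x₀,x₁)‖² = (1−m)|x₀|² + m|x₁|² and the target with ‖(y₀,y₁)‖² = (1−r)|y₀|² + r|y₁|². -/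
lemma sq_norm_convex_aux {n : ℕ} (s : ℝ) (hs0 : 0 ≤ s) (hs1 : s ≤ 1)
    (x y : EuclideanSpace ℝ (Fin n)) :
    ‖(1 - s) • x + s • y‖ ^ 2 ≤ (1 - s) * ‖x‖ ^ 2 + s * ‖y‖ ^ 2 := by
  have h := norm_add_le ((1 - s) • x) (s • y)
  rw [norm_smul, norm_smul, Real.norm_of_nonneg (by linarith), Real.norm_of_nonneg hs0] at h
  have hx := norm_nonneg x
  have hy := norm_nonneg y
  have hn := norm_nonneg ((1 - s) • x + s • y)
  have hsq : ‖(1 - s) • x + s • y‖ ^ 2 ≤ ((1 - s) * ‖x‖ + s * ‖y‖) ^ 2 := by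
    have := mul_self_le_mul_self hn h
    nlinarith [this]
  nlinarith [sq_nonneg (‖x‖ - ‖y‖), mul_nonneg hs0 (by linarith : (0:ℝ) ≤ 1 - s), hsq]

/-- The operator `A(x₀,x₁) = ((1-s)x₀+sx₁, (1-t)x₀+tx₁)` has norm at most 1 from the
`((1-m),m)`-weighted ℓ² product to the `((1-r),r)`-weighted ℓ² product, i.e. the weighted
square norm of the image is at most the weighted square norm of the input. -/
theorem op_norm_le_one (n : ℕ) (s t r m : ℝ)
    (hs0 : 0 ≤ s) (hs1 : s ≤ 1) (ht0 : 0 ≤ t) (ht1 : t ≤ 1) (hr0 : 0 ≤ r) (hr1 : r ≤ 1)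
    (hm : m = (1 - r) * s + r * t) (x₀ x₁ : EuclideanSpace ℝ (Fin n)) :
    (1 - r) * ‖(1 - s) • x₀ + s • x₁‖ ^ 2 + r * ‖(1 - t) • x₀ + t • x₁‖ ^ 2
      ≤ (1 - m) * ‖x₀‖ ^ 2 + m * ‖x₁‖ ^ 2 := by
  have h1 := sq_norm_convex_aux s hs0 hs1 x₀ x₁
  have h2 := sq_norm_convex_aux t ht0 ht1 x₀ x₁
  have g1 := mul_le_mul_of_nonneg_left h1 (by linarith : (0:ℝ) ≤ 1 - r)
  have g2 := mul_le_mul_of_nonneg_left h2 hr0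
  subst hm
  nlinarith [g1, g2]
end

section
/- Let α ∈ [0,1] and let B be a real n×n matrix such that |(Iₙ − B)x + B y|² ≤ (1−α)|x|² + α|y|² for all x, y ∈ ℝⁿ. Then B = α Iₙ. -/
open Matrix

lemma aux_lin_quad (c d : ℝ) (hd : 0 ≤ d) (h : ∀ t : ℝ, c * t ≤ d * t ^ 2) : c = 0 := by
  by_contra hc
  set t := c / (2 * (d + 1)) with ht
  have htne : t ≠ 0 := div_ne_zero hc (by positivity)
  have ht2 : 0 < t ^ 2 := by positivity
  have h1 := h t
  have hce : c = t * (2 * (d + 1)) := by rw [ht]; field_simp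
  have h3 : c * t = (2 * (d + 1)) * t ^ 2 := by rw [hce]; ring
  rw [h3] at h1
  nlinarith [ht2]

/-- No "exotic" Prékopa–Leindler situation: if `|(I - B)x + By|² ≤ (1-α)|x|² + α|y|²`
for all `x, y`, then `B = α I`. -/
theorem no_exotic (n : ℕ) (α : ℝ) (hα0 : 0 ≤ α) (hα1 : α ≤ 1)
    (B : Matrix (Fin n) (Fin n) ℝ)
    (h : ∀ x y : Fin n → ℝ,
      ∑ i, (((1 - B).mulVec x + B.mulVec y) i) ^ 2
        ≤ (1 - α) * ∑ i, (x i) ^ 2 + α * ∑ i, (y i) ^ 2) :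
    B = α • (1 : Matrix (Fin n) (Fin n) ℝ) := by
  have expand : ∀ (u v : Fin n → ℝ) (t : ℝ),
      ∑ i, (u i + t * v i) ^ 2
        = ∑ i, (u i) ^ 2 + 2 * t * ∑ i, u i * v i + t ^ 2 * ∑ i, (v i) ^ 2 := by
    intro u v t
    rw [Finset.mul_sum, Finset.mul_sum, ← Finset.sum_add_distrib, ← Finset.sum_add_distrib]
    exact Finset.sum_congr rfl (fun i _ => by ring)
  have hd : ∀ z : Fin n → ℝ, ∑ i, (B.mulVec z i) ^ 2 ≤ α * ∑ i, (z i) ^ 2 := by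
    intro z
    have H := h 0 z
    simpa [Matrix.mulVec_zero] using H
  have key : ∀ x z : Fin n → ℝ,
      ∑ i, x i * (B.mulVec z i) = α * ∑ i, x i * z i := by
    intro x z
    have ht : ∀ t : ℝ,
        (2 * (∑ i, x i * B.mulVec z i) - 2 * α * (∑ i, x i * z i)) * t
          ≤ (α * ∑ i, (z i) ^ 2 - ∑ i, (B.mulVec z i) ^ 2) * t ^ 2 := by
      intro t
      have H := h x (x + t • z)
      have e1 : ((1 - B).mulVec x + B.mulVec (x + t • z))
          = fun i => x i + t * B.mulVec z i := by
        funext i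
        simp [Matrix.sub_mulVec, Matrix.one_mulVec, Matrix.mulVec_add, Matrix.mulVec_smul,
          Pi.sub_apply, Pi.add_apply, Pi.smul_apply, smul_eq_mul]
        ring
      rw [e1] at H
      have e2 : ∑ i, (fun i => x i + t * B.mulVec z i) i ^ 2
          = ∑ i, (x i) ^ 2 + 2 * t * ∑ i, x i * B.mulVec z i
            + t ^ 2 * ∑ i, (B.mulVec z i) ^ 2 := expand x (fun i => B.mulVec z i) t
      have e3 : ∑ i, ((x + t • z) i) ^ 2
          = ∑ i, (x i) ^ 2 + 2 * t * ∑ i, x i * z i + t ^ 2 * ∑ i, (z i) ^ 2 := by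
        simpa using expand x z t
      rw [e2, e3] at H
      nlinarith [H]
    have hc := aux_lin_quad _ _ (by linarith [hd z]) ht
    linarith
  ext i j
  have hk := key (Pi.single i 1) (Pi.single j 1)
  have e4 : ∑ k, (Pi.single i 1 : Fin n → ℝ) k * B.mulVec (Pi.single j 1) k
      = B.mulVec (Pi.single j 1) i := by
    simp [Pi.single_apply]
  have e5 : B.mulVec (Pi.single j (1:ℝ)) i = B i j := by
    simp [Matrix.mulVec_single]
  have e6 : ∑ k, (Pi.single i 1 : Fin n → ℝ) k * (Pi.single j 1 : Fin n → ℝ) k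
      = if j = i then (1:ℝ) else 0 := by
    simp [Pi.single_apply]
  rw [e4, e5, e6] at hk
  rw [hk]
  simp [Matrix.smul_apply, Matrix.one_apply, eq_comm]
end

section
/- Let B₁, …, B_k be real n×n matrices with Σⱼ Bⱼ = Iₙ, and α₁, …, α_k ≥ 0 with Σⱼ αⱼ = 1, such that |Σⱼ Bⱼ xⱼ|² ≤ Σⱼ αⱼ |xⱼ|² for all x₁, …, x_k ∈ ℝⁿ. Then Bⱼ = αⱼ Iₙ for every j = 1, …, k. -/
/-!
At `x = (u, …, u)` both sides of the hypothesis equal `|u|²`, since `∑ⱼ Bⱼ = I` and `∑ⱼ αⱼ = 1`.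
Perturbing the single entry `x_{j₀}` to `u + t w` therefore gives a quadratic polynomial in `t`
that is `≤ 0` and vanishes at `t = 0`, so its linear coefficient
`2 (⟨u, B_{j₀} w⟩ - α_{j₀} ⟨u, w⟩)` is zero. As `u` and `w` are arbitrary, `B_{j₀} = α_{j₀} I`.
-/

open Matrix

section CommRing

variable {R : Type*} [CommRing R]

theorem Matrix.eq_smul_one_of_dotProduct_mulVec {m : Type*} [Fintype m] [DecidableEq m]
    {A : Matrix m m R} {c : R} (h : ∀ u w, u ⬝ᵥ A *ᵥ w = c * (u ⬝ᵥ w)) : A = c • 1 :=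
  ext_iff_mulVec.2 fun w => sub_eq_zero.1 <| dotProduct_eq_zero _ fun u => by
    rw [dotProduct_comm, dotProduct_sub, h, smul_mulVec, one_mulVec, dotProduct_smul, smul_eq_mul,
      sub_self]

variable {m ι : Type*} [Fintype m] [Fintype ι] [DecidableEq ι]

theorem sum_mulVec_add_single [DecidableEq m] {B : ι → Matrix m m R} (hB : ∑ j, B j = 1)
    (u v : m → R) (j₀ : ι) :
    ∑ j, B j *ᵥ (u + (Pi.single j₀ v : ι → m → R) j) = u + B j₀ *ᵥ v := by
  simp only [mulVec_add, Finset.sum_add_distrib, ← sum_mulVec, hB, one_mulVec]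
  rw [Fintype.sum_eq_single j₀ fun j hj => by simp [hj], Pi.single_eq_same]

theorem sum_mul_dotProduct_self_add_single {α : ι → R} (hα : ∑ j, α j = 1) (u v : m → R)
    (j₀ : ι) :
    ∑ j, α j * ((u + (Pi.single j₀ v : ι → m → R) j) ⬝ᵥ (u + (Pi.single j₀ v : ι → m → R) j)) =
      u ⬝ᵥ u + α j₀ * (2 * (u ⬝ᵥ v) + v ⬝ᵥ v) := by
  simp only [add_dotProduct, dotProduct_add, mul_add, Finset.sum_add_distrib, ← Finset.sum_mul,
    hα, one_mul]
  rw [Fintype.sum_eq_single j₀ fun j hj => by simp [hj],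
    Fintype.sum_eq_single j₀ fun j hj => by simp [hj],
    Fintype.sum_eq_single j₀ fun j hj => by simp [hj]]
  simp only [Pi.single_eq_same, dotProduct_comm v u]
  ring

end CommRing

section LinearOrderedField

variable {R : Type*} [Field R] [LinearOrder R] [IsStrictOrderedRing R]

theorem eq_zero_of_forall_mul_sq_add_mul_nonpos {a b : R} (h : ∀ t, a * t ^ 2 + b * t ≤ 0) :
    b = 0 := by
  have hdiscrim := discrim_le_zero (a := -a) (b := -b) (c := 0) fun t => by linarith [h t]
  rw [discrim] at hdiscrim
  nlinarith [sq_nonneg b]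

variable {m ι : Type*} [Fintype m] [DecidableEq m] [Fintype ι] [DecidableEq ι]
variable {B : ι → Matrix m m R} {α : ι → R}

theorem dotProduct_mulVec_eq_of_sum_mulVec_dotProduct_le (hB : ∑ j, B j = 1)
    (hα : ∑ j, α j = 1)
    (h : ∀ x : ι → m → R,
      (∑ j, B j *ᵥ x j) ⬝ᵥ (∑ j, B j *ᵥ x j) ≤ ∑ j, α j * (x j ⬝ᵥ x j))
    (j₀ : ι) (u w : m → R) : u ⬝ᵥ B j₀ *ᵥ w = α j₀ * (u ⬝ᵥ w) := by
  have hlinear := eq_zero_of_forall_mul_sq_add_mul_nonpos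
    (a := B j₀ *ᵥ w ⬝ᵥ B j₀ *ᵥ w - α j₀ * (w ⬝ᵥ w))
    (b := 2 * (u ⬝ᵥ B j₀ *ᵥ w - α j₀ * (u ⬝ᵥ w))) fun t => by
      have hperturb := h fun j => u + (Pi.single j₀ (t • w) : ι → m → R) j
      rw [sum_mulVec_add_single hB, sum_mul_dotProduct_self_add_single hα] at hperturb
      simp only [dotProduct_add, add_dotProduct, mulVec_smul, dotProduct_smul, smul_dotProduct,
        smul_eq_mul, dotProduct_comm (B j₀ *ᵥ w) u] at hperturb
      linarith
  linarith

theorem eq_smul_one_of_sum_mulVec_dotProduct_le (hB : ∑ j, B j = 1) (hα : ∑ j, α j = 1)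
    (h : ∀ x : ι → m → R,
      (∑ j, B j *ᵥ x j) ⬝ᵥ (∑ j, B j *ᵥ x j) ≤ ∑ j, α j * (x j ⬝ᵥ x j))
    (j : ι) : B j = α j • 1 :=
  eq_smul_one_of_dotProduct_mulVec <| dotProduct_mulVec_eq_of_sum_mulVec_dotProduct_le hB hα h j

end LinearOrderedField

theorem no_exotic_general_general (n k : ℕ) (B : Fin k → Matrix (Fin n) (Fin n) ℝ)
    (α : Fin k → ℝ) (hαsum : ∑ j, α j = 1)
    (hBsum : ∑ j, B j = (1 : Matrix (Fin n) (Fin n) ℝ))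
    (h : ∀ x : Fin k → (Fin n → ℝ),
      ∑ i, ((∑ j, (B j).mulVec (x j)) i) ^ 2 ≤ ∑ j, α j * ∑ i, (x j i) ^ 2) :
    ∀ j, B j = α j • (1 : Matrix (Fin n) (Fin n) ℝ) := by
  have hsq (v : Fin n → ℝ) : ∑ i, v i ^ 2 = v ⬝ᵥ v := by simp only [dotProduct, sq]
  refine eq_smul_one_of_sum_mulVec_dotProduct_le hBsum hαsum fun x => ?_
  simpa only [hsq] using h x

theorem no_exotic_general (n k : ℕ) (B : Fin k → Matrix (Fin n) (Fin n) ℝ)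
    (α : Fin k → ℝ) (hα : ∀ j, 0 ≤ α j) (hαsum : ∑ j, α j = 1)
    (hBsum : ∑ j, B j = (1 : Matrix (Fin n) (Fin n) ℝ))
    (h : ∀ x : Fin k → (Fin n → ℝ),
      ∑ i, ((∑ j, (B j).mulVec (x j)) i) ^ 2 ≤ ∑ j, α j * ∑ i, (x j i) ^ 2) :
    ∀ j, B j = α j • (1 : Matrix (Fin n) (Fin n) ℝ) :=
  no_exotic_general_general n k B α hαsum hBsum h
end
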